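/- Let char F ≠ 2 and n ≥ 1, and let Γ_n be the n×n matrix with Gram form as in the paper (Γ_1 = (1), Γ_2 = [[0,−1],[1,1]], etc., the standard indecomposable forms with cyclic unipotent/−unipotent asymmetry). Then Γ_n is invertible, its asymmetry S_n = Γ_n^{-1}Γ_n' is cyclic with minimal polynomial (X − ε)^n where ε = (−1)^{n+1}, and L(Γ_n) = {X : XᵀΓ_n + Γ_nX = 0} is an abelian Lie algebra of dimension ⌊n/2⌋, consisting of upper triangular matrices with constant super-diagonals in which all super-diagonals at even distance from the main diagonal vanish. -/

import Mathlib

open Polynomial Matrix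

attribute [local instance 100] LieRing.ofAssociativeRing

variable {F : Type*} [Field F]

def lieAlgOfForm {k : Type*} [Fintype k] [DecidableEq k] (S : Matrix k k F) :
    LieSubalgebra F (Matrix k k F) where
  carrier := {X | Xᵀ * S + S * X = 0}
  add_mem' := by
    intro X Y hX hY
    simp only [Set.mem_setOf_eq] at *
    rw [transpose_add, add_mul, mul_add, add_add_add_comm, hX, hY, add_zero]
  zero_mem' := by simp
  smul_mem' := by
    intro c X hX
    simp only [Set.mem_setOf_eq] at *
    rw [transpose_smul, smul_mul_assoc, mul_smul_comm, ← smul_add, hX, smul_zero]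
  lie_mem' := by
    intro X Y hX hY
    simp only [Set.mem_setOf_eq] at *
    have hX' : Xᵀ * S = -(S * X) := eq_neg_of_add_eq_zero_left hX
    have hY' : Yᵀ * S = -(S * Y) := eq_neg_of_add_eq_zero_left hY
    show ⁅X, Y⁆ᵀ * S + S * ⁅X, Y⁆ = 0
    rw [Ring.lie_def]
    calc (X * Y - Y * X)ᵀ * S + S * (X * Y - Y * X)
        = Yᵀ * (Xᵀ * S) - Xᵀ * (Yᵀ * S) + S * (X * Y - Y * X) := by
          rw [transpose_sub, transpose_mul, transpose_mul]; noncomm_ring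
      _ = Yᵀ * (-(S * X)) - Xᵀ * (-(S * Y)) + S * (X * Y - Y * X) := by rw [hX', hY']
      _ = -((Yᵀ * S) * X) + (Xᵀ * S) * Y + S * (X * Y - Y * X) := by noncomm_ring
      _ = -((-(S * Y)) * X) + (-(S * X)) * Y + S * (X * Y - Y * X) := by rw [hX', hY']
      _ = 0 := by noncomm_ring


/-- The indecomposable Gram matrix `Γ_n`: its `(i,j)` entry (one-indexed) is
`(-1)^(i+n)` when `i + j ∈ {n, n+1}` and `0` otherwise. -/
def GammaMatrix (F : Type*) [Field F] (n : ℕ) : Matrix (Fin n) (Fin n) F :=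
  Matrix.of fun i j =>
    if (i : ℕ) + (j : ℕ) = n - 1 ∨ (i : ℕ) + (j : ℕ) = n
      then (-1 : F) ^ ((i : ℕ) + n + 1) else 0

/-!
Write `N` for the nilpotent upper shift and `K` for the signed exchange matrix
`K i j = (-1)^i [i + j = n - 1]` (indices from `0`). Then `Γ_n = ε K (1 + N)` and
`Γ_nᵀ = K (1 - N)` with `ε = (-1)^(n+1)`, so the asymmetry `S = Γ_n⁻¹ Γ_nᵀ` satisfies
`(1 + N) S = ε (1 - N)`: up to the sign `ε`, `S` is the Cayley transform of `N`. Hence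
`(1 + N) (S - ε) = -2ε N`, and since `1 + N` is a unit commuting with `S`, `(S - ε)^k = 0` iff
`N^k = 0` iff `n ≤ k`. This pins down the minimal polynomial, which has degree `n` and is
therefore the characteristic polynomial.

Every `X ∈ L(Γ_n)` commutes with `S`, hence with `N`, which is a rational function of `S`; so
`X = p(N)` is upper triangular Toeplitz. As `Nᵀ K = -K N`, we get `p(N)ᵀ K = K p(-N)`, and the
defining equation becomes `K (p(N) + p(-N)) (1 + N) = 0`: `p` must be odd. Thus `L(Γ_n)` is the
span of the odd powers of `N` below `n`, an abelian Lie algebra of dimension `⌊n/2⌋`.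
-/

open Finset

lemma neg_one_pow_mul_neg_one_pow {R : Type*} [Monoid R] [HasDistribNeg R] (k : ℕ) :
    (-1 : R) ^ k * (-1) ^ k = 1 := by
  rw [← pow_add, ← two_mul, pow_mul, neg_one_sq, one_pow]

namespace Matrix

variable {R : Type*} {n : ℕ}

def upperShift (R : Type*) [Zero R] [One R] (n : ℕ) : Matrix (Fin n) (Fin n) R :=
  of fun i j => if (i : ℕ) + 1 = j then 1 else 0

section Zero

variable [Zero R]

def firstRow (X : Matrix (Fin n) (Fin n) R) (d : ℕ) : R :=
  if h : d < n then X ⟨0, by omega⟩ ⟨d, h⟩ else 0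

lemma constant_odd_superdiagonals_iff {M : Matrix (Fin n) (Fin n) R} :
    ((∀ i j : Fin n, ¬((i : ℕ) < j ∧ ((j : ℕ) - i) % 2 = 1) → M i j = 0) ∧
      ∀ i j k l : Fin n, (j : ℕ) - i = (l : ℕ) - k → (i : ℕ) < j → (k : ℕ) < l →
        M i j = M k l)
    ↔ (∀ i j : Fin n, M i j = if (i : ℕ) ≤ j then firstRow M (j - i) else 0) ∧
      ∀ d < n, Even d → firstRow M d = 0 := by
  constructor
  · rintro ⟨hodd, hconst⟩
    have heven : ∀ d < n, Even d → firstRow M d = 0 := fun d hd he => by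
      rw [Nat.even_iff] at he
      rw [firstRow, dif_pos hd]
      exact hodd _ _ (by simp; omega)
    refine ⟨fun i j => ?_, heven⟩
    split_ifs with hij
    · by_cases h : (i : ℕ) < j ∧ ((j : ℕ) - i) % 2 = 1
      · rw [firstRow, dif_pos (by omega)]
        exact hconst i j ⟨0, by omega⟩ ⟨j - i, by omega⟩ (by simp) h.1 (by simp; omega)
      · rw [hodd i j h, heven _ (by omega) (by rw [Nat.even_iff]; omega)]
    · exact hodd i j (by omega)
  · rintro ⟨hM, heven⟩
    refine ⟨fun i j h => ?_, fun i j k l hd hij hkl => ?_⟩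
    · rw [hM]
      split_ifs
      · exact heven _ (by omega) (by rw [Nat.even_iff]; omega)
      · rfl
    · rw [hM i j, hM k l, if_pos hij.le, if_pos hkl.le, hd]

end Zero

section Semiring

variable [Semiring R]

lemma upperShift_mul_apply (M : Matrix (Fin n) (Fin n) R) (i j : Fin n) :
    (upperShift R n * M) i j = if h : (i : ℕ) + 1 < n then M ⟨i + 1, h⟩ j else 0 := by
  rw [mul_apply]
  split_ifs with h
  · rw [Fintype.sum_eq_single ⟨i + 1, h⟩ fun k hk => by
      rw [upperShift, of_apply, if_neg (fun e => hk (Fin.ext e.symm)), zero_mul]]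
    simp [upperShift]
  · exact Fintype.sum_eq_zero _ fun k => by
      rw [upperShift, of_apply, if_neg (by omega), zero_mul]

lemma mul_upperShift_apply (M : Matrix (Fin n) (Fin n) R) (i j : Fin n) :
    (M * upperShift R n) i j = if h : 0 < (j : ℕ) then M i ⟨j - 1, by omega⟩ else 0 := by
  rw [mul_apply]
  split_ifs with h
  · rw [Fintype.sum_eq_single ⟨j - 1, by omega⟩ fun k hk => by
      rw [upperShift, of_apply, if_neg (fun e => hk (Fin.ext (by simp; omega))), mul_zero]]
    simp [upperShift]; omega
  · exact Fintype.sum_eq_zero _ fun k => by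
      rw [upperShift, of_apply, if_neg (by omega), mul_zero]

lemma upperShift_pow_apply (d : ℕ) (i j : Fin n) :
    (upperShift R n ^ d) i j = if (i : ℕ) + d = j then 1 else 0 := by
  induction d generalizing i with
  | zero => simp [one_apply, Fin.ext_iff]
  | succ d ih =>
    rw [pow_succ', upperShift_mul_apply]
    split_ifs with h h' h' <;> simp_all <;> omega

lemma upperShift_pow_eq_zero_iff [Nontrivial R] {d : ℕ} : upperShift R n ^ d = 0 ↔ n ≤ d := by
  constructor
  · intro h
    by_contra! hd
    simpa [upperShift_pow_apply] using congr_fun₂ h ⟨0, by omega⟩ ⟨d, hd⟩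
  · intro hd
    ext i j
    rw [upperShift_pow_apply, if_neg (by omega), zero_apply]

lemma isNilpotent_upperShift : IsNilpotent (upperShift R n) := by
  refine ⟨n, ?_⟩
  ext i j
  rw [upperShift_pow_apply, if_neg (by omega), zero_apply]

lemma sum_smul_upperShift_pow_apply (c : ℕ → R) (i j : Fin n) :
    (∑ d ∈ range n, c d • upperShift R n ^ d) i j
      = if (i : ℕ) ≤ j then c (j - i) else 0 := by
  simp only [sum_apply, smul_apply, upperShift_pow_apply, smul_eq_mul, mul_ite, mul_one, mul_zero]
  split_ifs with h
  · rw [sum_eq_single_of_mem (j - i : ℕ) (mem_range.2 (by omega))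
      fun d _ hd => if_neg (by omega), if_pos (by omega)]
  · exact sum_eq_zero fun d _ => if_neg (by omega)

lemma sum_smul_upperShift_pow_eq_zero_iff (c : ℕ → R) :
    ∑ d ∈ range n, c d • upperShift R n ^ d = 0 ↔ ∀ d < n, c d = 0 := by
  constructor
  · intro h d hd
    simpa [sum_smul_upperShift_pow_apply] using congr_fun₂ h ⟨0, by omega⟩ ⟨d, hd⟩
  · intro h
    exact sum_eq_zero fun d hd => by rw [h d (mem_range.1 hd), zero_smul]

lemma eq_sum_firstRow_smul_upperShift_pow_iff {X : Matrix (Fin n) (Fin n) R} :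
    X = ∑ d ∈ range n, firstRow X d • upperShift R n ^ d
      ↔ ∀ i j : Fin n, X i j = if (i : ℕ) ≤ j then firstRow X (j - i) else 0 :=
  ⟨fun h i j => (congr_fun₂ h i j).trans (sum_smul_upperShift_pow_apply _ i j),
    fun h => by ext i j; rw [h, sum_smul_upperShift_pow_apply]⟩

lemma apply_eq_firstRow_of_commute_upperShift {X : Matrix (Fin n) (Fin n) R}
    (hX : Commute X (upperShift R n)) (i j : Fin n) :
    X i j = if (i : ℕ) ≤ j then firstRow X (j - i) else 0 := by
  have h := fun i j => congr_fun₂ hX.eq i j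
  simp only [mul_upperShift_apply, upperShift_mul_apply] at h
  obtain ⟨i, hi⟩ := i
  induction i generalizing j with
  | zero => simp [firstRow]
  | succ i ih =>
    obtain ⟨_ | j, hj⟩ := j
    · simpa [hi] using (h ⟨i, by omega⟩ ⟨0, hj⟩).symm
    · have := h ⟨i, by omega⟩ ⟨j + 1, hj⟩
      simp only [Nat.zero_lt_succ, dite_true, hi, Nat.add_sub_cancel] at this
      rw [← this, ih ⟨j, by omega⟩ (by omega)]
      simp only [Nat.add_le_add_iff_right, Nat.add_sub_add_right]

end Semiring

section Ring

variable [Ring R]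

lemma linearIndependent_upperShift_pow_odd :
    LinearIndependent R fun t : Fin (n / 2) => upperShift R n ^ (2 * (t : ℕ) + 1) := by
  rw [Fintype.linearIndependent_iff]
  intro g hg t
  have := t.2
  have := congr_fun₂ hg ⟨0, by omega⟩ ⟨2 * t + 1, by omega⟩
  simpa [sum_apply, upperShift_pow_apply, Fin.val_eq_val] using this

lemma isUnit_one_add_upperShift : IsUnit (1 + upperShift R n) :=
  isNilpotent_upperShift.isUnit_one_add

end Ring

section CommRing

variable [CommRing R]

lemma transpose_upperShift_mul_apply (M : Matrix (Fin n) (Fin n) R) (i j : Fin n) :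
    ((upperShift R n)ᵀ * M) i j = if h : 0 < (i : ℕ) then M ⟨i - 1, by omega⟩ j else 0 := by
  rw [← transpose_transpose M, ← transpose_mul, transpose_apply, mul_upperShift_apply]
  rfl

def signedExchange (R : Type*) [CommRing R] (n : ℕ) : Matrix (Fin n) (Fin n) R :=
  of fun i j => if j = Fin.rev i then (-1) ^ (i : ℕ) else 0

lemma signedExchange_mul_apply (M : Matrix (Fin n) (Fin n) R) (i j : Fin n) :
    (signedExchange R n * M) i j = (-1) ^ (i : ℕ) * M (Fin.rev i) j := by
  rw [mul_apply, Fintype.sum_eq_single (Fin.rev i) fun k hk => by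
    rw [signedExchange, of_apply, if_neg hk, zero_mul]]
  simp [signedExchange]

lemma signedExchange_mul_self :
    signedExchange R n * signedExchange R n = (-1 : R) ^ (n + 1) • 1 := by
  ext i j
  rw [signedExchange_mul_apply, signedExchange, of_apply, Fin.rev_rev, smul_apply, one_apply]
  by_cases h : i = j
  · rw [if_pos h.symm, if_pos h, ← pow_add, smul_eq_mul, mul_one]
    apply neg_one_pow_congr
    rw [Nat.even_iff, Nat.even_iff, Fin.val_rev]
    omega
  · rw [if_neg (Ne.symm h), if_neg h, mul_zero, smul_zero]

lemma isUnit_signedExchange : IsUnit (signedExchange R n) := by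
  refine IsUnit.of_mul_eq_one ((-1 : R) ^ (n + 1) • signedExchange R n) ?_
  rw [mul_smul_comm, signedExchange_mul_self, smul_smul, neg_one_pow_mul_neg_one_pow, one_smul]

lemma transpose_upperShift_mul_signedExchange :
    (upperShift R n)ᵀ * signedExchange R n = -(signedExchange R n * upperShift R n) := by
  ext i j
  rw [transpose_upperShift_mul_apply, neg_apply, signedExchange_mul_apply, upperShift]
  obtain ⟨_ | i, hi⟩ := i
  · simp only [Nat.lt_irrefl, dite_false, of_apply, Fin.val_rev]
    rw [if_neg (by omega), mul_zero, neg_zero]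
  · simp only [signedExchange, of_apply, Fin.ext_iff, Fin.val_rev, Nat.zero_lt_succ, dite_true,
      Nat.add_sub_cancel]
    split_ifs with h₁ h₂ h₂
    · rw [pow_succ]; ring
    · omega
    · omega
    · simp

lemma transpose_sum_smul_upperShift_pow_mul_signedExchange (c : ℕ → R) :
    (∑ d ∈ range n, c d • upperShift R n ^ d)ᵀ * signedExchange R n
      = signedExchange R n * ∑ d ∈ range n, ((-1) ^ d * c d) • upperShift R n ^ d := by
  have h : SemiconjBy (signedExchange R n) ((-1 : R) • upperShift R n) (upperShift R n)ᵀ := by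
    rw [SemiconjBy, neg_one_smul, mul_neg, transpose_upperShift_mul_signedExchange]
  simp only [transpose_sum, transpose_smul, transpose_pow, sum_mul, mul_sum, smul_mul_assoc,
    mul_smul_comm]
  refine sum_congr rfl fun d _ => ?_
  rw [← (h.pow_right d).eq, _root_.smul_pow, mul_smul_comm, smul_smul, mul_comm]

end CommRing

end Matrix

open Matrix

section Cayley

variable {A : Type*} [Ring A] {x n t : A}

-- `n = (1 - t) (1 + t)⁻¹` is the Cayley transform of `t`.
lemma Commute.of_one_add_mul_eq_one_sub (ht : (1 + n) * t = 1 - n) (hn : IsUnit (1 + n))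
    (h2 : IsUnit (2 : A)) (hxt : Commute x t) : Commute x n := by
  have hsum : (1 + n) * (1 + t) = 2 := by
    rw [mul_add, mul_one, ht, add_add_sub_cancel, one_add_one_eq_two]
  have hunit : IsUnit (1 + t) := by
    rw [← hn.unit.inv_mul_cancel_left (1 + t), IsUnit.unit_spec, hsum]
    exact hn.unit⁻¹.isUnit.mul h2
  have hn_mul : n * (1 + t) = 1 - t := by
    calc n * (1 + t) = (1 + n) * t + n - t := by noncomm_ring
      _ = 1 - t := by rw [ht]; noncomm_ring
  have key : x * n * (1 + t) = n * x * (1 + t) := by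
    calc x * n * (1 + t) = x * (1 - t) := by rw [mul_assoc, hn_mul]
      _ = (1 - t) * x := ((Commute.one_right x).sub_right hxt).eq
      _ = n * ((1 + t) * x) := by rw [← mul_assoc, hn_mul]
      _ = n * x * (1 + t) := by rw [← ((Commute.one_right x).add_right hxt).eq, mul_assoc]
  exact hunit.mul_left_inj.mp key

end Cayley

section Minpoly

variable {A : Type*} [Ring A] [Algebra F A]

lemma minpoly_eq_X_sub_C_pow {a : A} {c : F} {k : ℕ} (h : (a - algebraMap F A c) ^ (k + 1) = 0)
    (h' : (a - algebraMap F A c) ^ k ≠ 0) : minpoly F a = (X - C c) ^ (k + 1) := by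
  have haeval : ∀ m, aeval a ((X - C c) ^ m) = (a - algebraMap F A c) ^ m := by simp
  have hint : IsIntegral F a :=
    ⟨_, (monic_X_sub_C c).pow (k + 1), by rw [← haeval] at h; exact h⟩
  obtain ⟨m, hm, hassoc⟩ := (dvd_prime_pow (prime_X_sub_C c) (k + 1)).mp
    (minpoly.dvd F a (by rw [haeval, h]))
  have heq := eq_of_monic_of_associated (minpoly.monic hint) ((monic_X_sub_C c).pow m) hassoc
  obtain rfl : m = k + 1 := by
    by_contra hne
    apply h'
    rw [← haeval, ← minpoly.dvd_iff, heq]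
    exact pow_dvd_pow _ (by omega)
  exact heq

lemma sub_algebraMap_pow_eq_zero_iff {N S : A} {ε : F} (hU : IsUnit (1 + N))
    (hS : (1 + N) * S = ε • (1 - N)) (hε : 2 * ε ≠ 0) (k : ℕ) :
    (S - algebraMap F A ε) ^ k = 0 ↔ N ^ k = 0 := by
  have hS' : S = ↑hU.unit⁻¹ * (ε • (1 - N)) := by
    rw [← hS, ← mul_assoc, IsUnit.val_inv_mul, one_mul]
  have hcomm : Commute (1 + N) (S - algebraMap F A ε) := by
    have hN : Commute (1 + N) N := (Commute.one_left N).add_left (Commute.refl N)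
    refine Commute.sub_right ?_ (Algebra.commutes ε _).symm
    rw [hS']
    exact (Commute.units_inv_right (by rw [hU.unit_spec]; exact Commute.refl _)).mul_right
      (((Commute.one_right _).sub_right hN).smul_right ε)
  have hmul : (1 + N) * (S - algebraMap F A ε) = (-(2 * ε)) • N := by
    rw [mul_sub, hS, Algebra.algebraMap_eq_smul_one, mul_smul_comm, mul_one]
    module
  rw [← (hU.pow k).mul_right_eq_zero, ← hcomm.mul_pow, hmul, _root_.smul_pow, smul_eq_zero,
    or_iff_right (pow_ne_zero k (neg_ne_zero.mpr hε))]

end Minpoly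

lemma Matrix.minpoly_eq_charpoly_of_natDegree_eq {k : Type*} [Fintype k] [DecidableEq k]
    {M : Matrix k k F} (h : (minpoly F M).natDegree = Fintype.card k) :
    minpoly F M = M.charpoly :=
  (eq_of_monic_of_dvd_of_natDegree_le (minpoly.monic (Matrix.isIntegral M))
    M.charpoly_monic (minpoly_dvd_charpoly M) (by rw [charpoly_natDegree_eq_dim, h])).symm

lemma mem_lieAlgOfForm_iff {k : Type*} [Fintype k] [DecidableEq k] {S M : Matrix k k F} :
    M ∈ lieAlgOfForm S ↔ Mᵀ * S + S * M = 0 :=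
  Iff.rfl

lemma commute_inv_mul_transpose_of_mem_lieAlgOfForm {k : Type*} [Fintype k] [DecidableEq k]
    {B M : Matrix k k F} (hB : IsUnit B) (hM : M ∈ lieAlgOfForm B) :
    Commute M (B⁻¹ * Bᵀ) := by
  have hdet := (isUnit_iff_isUnit_det B).mp hB
  rw [mem_lieAlgOfForm_iff] at hM
  have hBM : B * M = -(Mᵀ * B) := eq_neg_of_add_eq_zero_right hM
  have hBtM : Bᵀ * M = -(Mᵀ * Bᵀ) := by
    have := congr_arg transpose hM
    rw [transpose_add, transpose_mul, transpose_mul, transpose_transpose, transpose_zero] at this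
    exact eq_neg_of_add_eq_zero_left this
  calc M * (B⁻¹ * Bᵀ) = B⁻¹ * (B * M) * B⁻¹ * Bᵀ := by
        rw [← mul_assoc B⁻¹, nonsing_inv_mul _ hdet, one_mul, mul_assoc]
    _ = -(B⁻¹ * Mᵀ * (B * B⁻¹) * Bᵀ) := by rw [hBM]; noncomm_ring
    _ = -(B⁻¹ * (Mᵀ * Bᵀ)) := by rw [mul_nonsing_inv _ hdet]; noncomm_ring
    _ = B⁻¹ * Bᵀ * M := by rw [mul_assoc, hBtM]; noncomm_ring

namespace GammaMatrix

variable {n : ℕ}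

lemma eq_smul_signedExchange_mul :
    GammaMatrix F n = (-1 : F) ^ (n + 1) • (signedExchange F n * (1 + upperShift F n)) := by
  ext i j
  simp only [GammaMatrix, of_apply, Matrix.smul_apply, signedExchange_mul_apply, Matrix.add_apply,
    one_apply, upperShift, Fin.ext_iff, Fin.val_rev, smul_eq_mul]
  split_ifs <;> first | omega | ring

lemma transpose_eq_signedExchange_mul :
    (GammaMatrix F n)ᵀ = signedExchange F n * (1 - upperShift F n) := by
  ext i j
  simp only [GammaMatrix, transpose_apply, of_apply, signedExchange_mul_apply, Matrix.sub_apply,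
    one_apply, upperShift, Fin.ext_iff, Fin.val_rev]
  split_ifs <;> first | omega | skip
  · rw [sub_zero, mul_one]
    exact neg_one_pow_congr (by rw [Nat.even_iff, Nat.even_iff]; omega)
  · rw [zero_sub, mul_neg_one, ← neg_one_mul ((-1 : F) ^ (i : ℕ)), ← pow_succ']
    exact neg_one_pow_congr (by rw [Nat.even_iff, Nat.even_iff]; omega)
  · ring

lemma isUnit : IsUnit (GammaMatrix F n) := by
  rw [eq_smul_signedExchange_mul]
  have h := ((isUnit_signedExchange (R := F) (n := n)).mul isUnit_one_add_upperShift).smul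
    ((-1 : Fˣ) ^ (n + 1))
  rwa [Units.smul_def, Units.val_pow_eq_pow_val, Units.val_neg, Units.val_one] at h

lemma one_add_upperShift_mul_inv_mul_transpose :
    (1 + upperShift F n) * ((GammaMatrix F n)⁻¹ * (GammaMatrix F n)ᵀ)
      = (-1 : F) ^ (n + 1) • (1 - upperShift F n) := by
  set S := (GammaMatrix F n)⁻¹ * (GammaMatrix F n)ᵀ
  have hΓ : GammaMatrix F n * S = (GammaMatrix F n)ᵀ :=
    mul_nonsing_inv_cancel_left _ _ ((isUnit_iff_isUnit_det _).mp isUnit)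
  rw [transpose_eq_signedExchange_mul, eq_smul_signedExchange_mul] at hΓ
  apply isUnit_signedExchange.mul_left_cancel
  rw [mul_smul_comm, ← hΓ, smul_mul_assoc, smul_smul, neg_one_pow_mul_neg_one_pow, one_smul,
    mul_assoc]

lemma minpoly_inv_mul_transpose (hn : 1 ≤ n) (hchar : ringChar F ≠ 2) :
    minpoly F ((GammaMatrix F n)⁻¹ * (GammaMatrix F n)ᵀ)
      = (X - C ((-1 : F) ^ (n + 1))) ^ n := by
  have hpow := sub_algebraMap_pow_eq_zero_iff (A := Matrix (Fin n) (Fin n) F)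
    isUnit_one_add_upperShift one_add_upperShift_mul_inv_mul_transpose
    (mul_ne_zero (Ring.two_ne_zero hchar) (pow_ne_zero _ (neg_ne_zero.2 one_ne_zero)))
  obtain ⟨m, rfl⟩ : ∃ m, n = m + 1 := ⟨n - 1, by omega⟩
  apply minpoly_eq_X_sub_C_pow
  · rw [hpow, upperShift_pow_eq_zero_iff]
  · rw [Ne, hpow, upperShift_pow_eq_zero_iff]
    omega

lemma minpoly_inv_mul_transpose_eq_charpoly (hn : 1 ≤ n) (hchar : ringChar F ≠ 2) :
    minpoly F ((GammaMatrix F n)⁻¹ * (GammaMatrix F n)ᵀ)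
      = ((GammaMatrix F n)⁻¹ * (GammaMatrix F n)ᵀ).charpoly := by
  apply minpoly_eq_charpoly_of_natDegree_eq
  rw [minpoly_inv_mul_transpose hn hchar, natDegree_pow, natDegree_X_sub_C, mul_one,
    Fintype.card_fin]

lemma commute_upperShift_of_mem_lieAlgOfForm (hchar : ringChar F ≠ 2)
    {M : Matrix (Fin n) (Fin n) F} (hM : M ∈ lieAlgOfForm (GammaMatrix F n)) :
    Commute M (upperShift F n) := by
  have h2 : IsUnit (2 : Matrix (Fin n) (Fin n) F) := by
    have h := (isUnit_iff_ne_zero.2 (Ring.two_ne_zero hchar)).map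
      (algebraMap F (Matrix (Fin n) (Fin n) F))
    rwa [map_ofNat] at h
  refine Commute.of_one_add_mul_eq_one_sub ?_ isUnit_one_add_upperShift h2
    ((commute_inv_mul_transpose_of_mem_lieAlgOfForm isUnit hM).smul_right ((-1 : F) ^ (n + 1)))
  rw [mul_smul_comm, one_add_upperShift_mul_inv_mul_transpose, smul_smul,
    neg_one_pow_mul_neg_one_pow, one_smul]

lemma sum_smul_upperShift_pow_mem_lieAlgOfForm_iff (hchar : ringChar F ≠ 2) (c : ℕ → F) :
    ∑ d ∈ range n, c d • upperShift F n ^ d ∈ lieAlgOfForm (GammaMatrix F n)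
      ↔ ∀ d < n, Even d → c d = 0 := by
  set P := ∑ d ∈ range n, c d • upperShift F n ^ d
  have hcomm : Commute (1 + upperShift F n) P := Commute.sum_right _ _ _ fun d _ =>
    (((Commute.one_left _).add_left (Commute.refl _)).pow_right d).smul_right (c d)
  have key : Pᵀ * GammaMatrix F n + GammaMatrix F n * P = (-1 : F) ^ (n + 1) •
      (signedExchange F n * ((∑ d ∈ range n, ((-1) ^ d * c d + c d) • upperShift F n ^ d)
        * (1 + upperShift F n))) := by
    rw [eq_smul_signedExchange_mul, mul_smul_comm, smul_mul_assoc, ← smul_add, ← mul_assoc,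
      transpose_sum_smul_upperShift_pow_mul_signedExchange, mul_assoc, mul_assoc, hcomm.eq,
      ← mul_add, ← add_mul, ← sum_add_distrib]
    simp_rw [add_smul]
  rw [mem_lieAlgOfForm_iff, key, smul_eq_zero,
    or_iff_right (pow_ne_zero _ (neg_ne_zero.2 one_ne_zero)),
    isUnit_signedExchange.mul_right_eq_zero, isUnit_one_add_upperShift.mul_left_eq_zero,
    sum_smul_upperShift_pow_eq_zero_iff]
  refine forall₂_congr fun d _ => ?_
  rcases Nat.even_or_odd d with hd | hd
  · simp [hd.neg_one_pow, hd, ← two_mul, Ring.two_ne_zero hchar]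
  · simp [hd.neg_one_pow, Nat.not_even_iff_odd.2 hd]

lemma mem_lieAlgOfForm_iff_eq_sum (hchar : ringChar F ≠ 2) {M : Matrix (Fin n) (Fin n) F} :
    M ∈ lieAlgOfForm (GammaMatrix F n) ↔
      M = ∑ d ∈ range n, firstRow M d • upperShift F n ^ d ∧
        ∀ d < n, Even d → firstRow M d = 0 := by
  constructor
  · intro hM
    have hsum := eq_sum_firstRow_smul_upperShift_pow_iff.2
      (apply_eq_firstRow_of_commute_upperShift (commute_upperShift_of_mem_lieAlgOfForm hchar hM))
    exact ⟨hsum, (sum_smul_upperShift_pow_mem_lieAlgOfForm_iff hchar _).1 (hsum ▸ hM)⟩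
  · rintro ⟨hsum, heven⟩
    rw [hsum]
    exact (sum_smul_upperShift_pow_mem_lieAlgOfForm_iff hchar _).2 heven

lemma commute_of_mem_lieAlgOfForm (hchar : ringChar F ≠ 2) {M M' : Matrix (Fin n) (Fin n) F}
    (hM : M ∈ lieAlgOfForm (GammaMatrix F n)) (hM' : M' ∈ lieAlgOfForm (GammaMatrix F n)) :
    Commute M M' := by
  rw [((mem_lieAlgOfForm_iff_eq_sum hchar).1 hM).1]
  exact Commute.sum_left _ _ _ fun d _ =>
    (((commute_upperShift_of_mem_lieAlgOfForm hchar hM').pow_right d).smul_right _).symm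

lemma isLieAbelian_lieAlgOfForm (hchar : ringChar F ≠ 2) :
    IsLieAbelian (lieAlgOfForm (GammaMatrix F n)) := by
  refine ⟨fun x y => Subtype.ext ?_⟩
  rw [LieSubalgebra.coe_bracket, ZeroMemClass.coe_zero, Ring.lie_def, sub_eq_zero]
  exact (commute_of_mem_lieAlgOfForm hchar x.2 y.2).eq

lemma lieAlgOfForm_toSubmodule_eq_span (hchar : ringChar F ≠ 2) :
    (lieAlgOfForm (GammaMatrix F n)).toSubmodule
      = Submodule.span F
          (Set.range fun t : Fin (n / 2) => upperShift F n ^ (2 * (t : ℕ) + 1)) := by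
  apply le_antisymm
  · intro M hM
    obtain ⟨hsum, heven⟩ := (mem_lieAlgOfForm_iff_eq_sum hchar).1 hM
    rw [hsum]
    refine Submodule.sum_mem _ fun d hd => ?_
    obtain ⟨t, rfl | rfl⟩ := Nat.even_or_odd' d
    · rw [heven _ (mem_range.1 hd) (even_two_mul t), zero_smul]
      exact zero_mem _
    · exact Submodule.smul_mem _ _ (Submodule.subset_span ⟨⟨t, by simp at hd; omega⟩, rfl⟩)
  · rw [Submodule.span_le]
    rintro _ ⟨t, rfl⟩
    have ht : 2 * (t : ℕ) + 1 < n := by omega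
    have hpow : upperShift F n ^ (2 * (t : ℕ) + 1)
        = ∑ d ∈ range n,
            (if d = 2 * (t : ℕ) + 1 then (1 : F) else 0) • upperShift F n ^ d := by
      simp [ht]
    simp only [SetLike.mem_coe, LieSubalgebra.mem_toSubmodule]
    rw [hpow, sum_smul_upperShift_pow_mem_lieAlgOfForm_iff hchar]
    intro d _ hd
    rw [if_neg (by rintro rfl; exact Nat.not_even_two_mul_add_one _ hd)]

lemma finrank_lieAlgOfForm (hchar : ringChar F ≠ 2) :
    Module.finrank F (lieAlgOfForm (GammaMatrix F n)) = n / 2 := by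
  change Module.finrank F (lieAlgOfForm (GammaMatrix F n)).toSubmodule = n / 2
  rw [lieAlgOfForm_toSubmodule_eq_span hchar,
    finrank_span_eq_card linearIndependent_upperShift_pow_odd, Fintype.card_fin]

end GammaMatrix

/-- For `char F ≠ 2` and `n ≥ 1`, the matrix `Γ_n` is invertible, its asymmetry
`S_n = Γ_n⁻¹ Γ_nᵀ` is cyclic with minimal polynomial `(X − ε)^n`, `ε = (−1)^(n+1)`, and
`L(Γ_n)` is abelian of dimension `⌊n/2⌋`, consisting of the upper triangular matrices
with constant super-diagonals whose super-diagonals at even distance from the main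
diagonal vanish. -/
theorem stmt18 (n : ℕ) (hn : 1 ≤ n) (hchar : ringChar F ≠ 2) :
    IsUnit (GammaMatrix F n) ∧
      minpoly F ((GammaMatrix F n)⁻¹ * (GammaMatrix F n)ᵀ)
        = (Polynomial.X - Polynomial.C ((-1 : F) ^ (n + 1))) ^ n ∧
      minpoly F ((GammaMatrix F n)⁻¹ * (GammaMatrix F n)ᵀ)
        = ((GammaMatrix F n)⁻¹ * (GammaMatrix F n)ᵀ).charpoly ∧
      (∀ X : Matrix (Fin n) (Fin n) F,
        X ∈ lieAlgOfForm (GammaMatrix F n) ↔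
          ((∀ i j : Fin n, ¬((i : ℕ) < (j : ℕ) ∧ ((j : ℕ) - (i : ℕ)) % 2 = 1) → X i j = 0) ∧
            ∀ i j k l : Fin n, (j : ℕ) - (i : ℕ) = (l : ℕ) - (k : ℕ) →
              (i : ℕ) < (j : ℕ) → (k : ℕ) < (l : ℕ) → X i j = X k l)) ∧
      IsLieAbelian (lieAlgOfForm (GammaMatrix F n)) ∧
      Module.finrank F (lieAlgOfForm (GammaMatrix F n)) = n / 2 := by
  refine ⟨GammaMatrix.isUnit, GammaMatrix.minpoly_inv_mul_transpose hn hchar,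
    GammaMatrix.minpoly_inv_mul_transpose_eq_charpoly hn hchar, fun M => ?_,
    GammaMatrix.isLieAbelian_lieAlgOfForm hchar, GammaMatrix.finrank_lieAlgOfForm hchar⟩
  rw [GammaMatrix.mem_lieAlgOfForm_iff_eq_sum hchar, eq_sum_firstRow_smul_upperShift_pow_iff,
    constant_odd_superdiagonals_iff]
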